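/- Let X : Λ → Λ be a bounded linear operator with X² = I, let α ∈ ℂ \ {0}, and let M : Λ → Λ* be bounded linear such that M + X^⊤ M X has a bounded inverse. Then for any γ ∈ Λ and τ ∈ Λ* the following are equivalent: (i) (I − X) γ = 0 and (I + X^⊤) τ = 0; (ii) α M (I − X) γ + (I + X^⊤) τ = 0. -/
import Mathlib


/-- The transpose (dual map) `B^⊤ : Y* → X*` of a bounded linear operator `B : X → Y`. -/
noncomputable def trOp {X Y : Type*} [NormedAddCommGroup X] [NormedSpace ℂ X]
    [NormedAddCommGroup Y] [NormedSpace ℂ Y] (B : X →L[ℂ] Y) :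
    (Y →L[ℂ] ℂ) →L[ℂ] (X →L[ℂ] ℂ) :=
  (ContinuousLinearMap.compL ℂ X Y ℂ).flip B

set_option synthInstance.maxHeartbeats 1000000 in
set_option maxHeartbeats 1000000 in
/-- Lemma on generalized Robin transmission conditions:
if `X² = I`, `α ≠ 0` and `M + X^⊤ M X` has a bounded inverse, then
`(I − X)γ = 0 ∧ (I + X^⊤)τ = 0  ⟺  α M (I − X) γ + (I + X^⊤) τ = 0`. -/
theorem statement8
    {Lam : Type*}
    [NormedAddCommGroup Lam] [InnerProductSpace ℂ Lam] [CompleteSpace Lam]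
    (X : Lam →L[ℂ] Lam)
    (hX2 : X.comp X = ContinuousLinearMap.id ℂ Lam)
    (α : ℂ) (hα : α ≠ 0)
    (M : Lam →L[ℂ] (Lam →L[ℂ] ℂ))
    -- Assumption A3: `M + X^⊤ M X` has a bounded inverse
    (Ninv : (Lam →L[ℂ] ℂ) →L[ℂ] Lam)
    (hNl : ∀ l : Lam, Ninv ((M + (trOp X).comp (M.comp X)) l) = l)
    (hNr : ∀ μ : Lam →L[ℂ] ℂ, (M + (trOp X).comp (M.comp X)) (Ninv μ) = μ) :
    ∀ (γ : Lam) (τ : Lam →L[ℂ] ℂ),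
      (γ - X γ = 0 ∧ τ + trOp X τ = 0) ↔
      α • M (γ - X γ) + (τ + trOp X τ) = 0 := by
  intro γ τ
  have hXX : ∀ v, X (X v) = v := fun v => congrFun (congrArg DFunLike.coe hX2) v
  constructor
  · rintro ⟨h1, h2⟩
    rw [h1, h2, map_zero]
    ext x
    simp
  · intro h
    set g := γ - X γ with hg
    set t := τ + trOp X τ with ht
    have hXg : X g = -g := by
      rw [hg, map_sub, hXX]
      abel
    have htr : ∀ (μ : Lam →L[ℂ] ℂ) (x : Lam), trOp X μ x = μ (X x) := fun μ x => rfl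
    have hXt : trOp X t = t := by
      ext x
      simp [ht, htr, hXX, map_add]
      ring
    have h2 : α • (trOp X) (M g) + t = 0 := by
      have := congrArg (fun μ => (trOp X) μ) h
      simpa [map_add, map_smul, hXt] using this
    have hMgeq : (trOp X) (M g) = M g := by
      have e1 : α • trOp X (M g) = α • M g := by
        have : α • trOp X (M g) = -t := by
          have := h2; linear_combination (norm := abel) this
        rw [this]
        have : α • M g = -t := by
          have := h; linear_combination (norm := abel) this
        rw [this]
      exact smul_right_injective _ hα e1
    have hNg : (M + (trOp X).comp (M.comp X)) g = 0 := by
      rw [ContinuousLinearMap.add_apply, ContinuousLinearMap.comp_apply,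
        ContinuousLinearMap.comp_apply, hXg, map_neg, map_neg, hMgeq]
      abel
    have hg0 : g = 0 := by
      have := hNl g
      rw [hNg] at this
      simpa using this.symm
    have ht0 : t = 0 := by
      have := h
      rw [hg0, map_zero] at this
      have hz : α • (0 : Lam →L[ℂ] ℂ) = 0 := by ext x; simp
      rw [hz, zero_add] at this
      exact this
    exact ⟨hg0, ht0⟩
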